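/- Let R be a strongly right C4*-ring. Assume that R = Σ × T for rings Σ and T, where Σ is semisimple artinian, the right regular module T_T is summand-square-free, and T satisfies the hereditary side-transfer condition HST and the corner-stability axiom CSA. Then R is a strongly left C4*-ring. -/

import Mathlib

open MulOpposite

section C4Defs

/-- A submodule is a direct summand if it has a complement. -/
def IsDirectSummand {R M : Type*} [Ring R] [AddCommGroup M] [Module R M]
    (A : Submodule R M) : Prop :=
  ∃ B : Submodule R M, IsCompl A B

/-- `M` is a `C4`-module over `R`: for every internal direct sum decomposition `M = A ⊕ B`
and every homomorphism `f : A → B` whose kernel is a direct summand of `A`, the image of `f`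
is a direct summand of `B`. -/
def IsC4Module (R M : Type*) [Ring R] [AddCommGroup M] [Module R M] : Prop :=
  ∀ A B : Submodule R M, IsCompl A B → ∀ f : A →ₗ[R] B,
    IsDirectSummand (LinearMap.ker f) → IsDirectSummand (LinearMap.range f)

/-- `M` is a `C4*`-module: every submodule of `M` is a `C4`-module. -/
def IsC4StarModule (R M : Type*) [Ring R] [AddCommGroup M] [Module R M] : Prop :=
  ∀ N : Submodule R M, IsC4Module R N

/-- `M` is square-free: no nonzero submodules `A`, `B` with `A ⊓ B = ⊥` and `A ≅ B`. -/
def IsSquareFreeModule (R M : Type*) [Ring R] [AddCommGroup M] [Module R M] : Prop :=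
  ∀ A B : Submodule R M, A ≠ ⊥ → B ≠ ⊥ → A ⊓ B = ⊥ → IsEmpty (A ≃ₗ[R] B)

/-- `M` is summand-square-free: no nonzero direct summands `A`, `B` with `A ⊓ B = ⊥`
and `A ≅ B`. -/
def IsSummandSquareFree (R M : Type*) [Ring R] [AddCommGroup M] [Module R M] : Prop :=
  ∀ A B : Submodule R M, IsDirectSummand A → IsDirectSummand B →
    A ≠ ⊥ → B ≠ ⊥ → A ⊓ B = ⊥ → IsEmpty (A ≃ₗ[R] B)

/-- `X` is an essential submodule of `A`. -/
def IsEssentialIn {R M : Type*} [Ring R] [AddCommGroup M] [Module R M]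
    (X A : Submodule R M) : Prop :=
  X ≤ A ∧ ∀ N : Submodule R M, N ≤ A → N ≠ ⊥ → X ⊓ N ≠ ⊥

/-- A triple `(X, Y, f)` where `X`, `Y` are semisimple direct summands of `M` with
`X ⊓ Y = ⊥` and `f : X ≅ Y` an isomorphism.  These are the elements of the poset `S(M)`
from the definition of semi-weak-CS modules. -/
structure SWTriple (R M : Type*) [Ring R] [AddCommGroup M] [Module R M] where
  X : Submodule R M
  Y : Submodule R M
  semisimpleX : IsSemisimpleModule R X
  semisimpleY : IsSemisimpleModule R Y
  summandX : IsDirectSummand X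
  summandY : IsDirectSummand Y
  disj : X ⊓ Y = ⊥
  f : X ≃ₗ[R] Y

/-- The extension order on the poset `S(M)` of triples: `(X₁,Y₁,f₁) ≤ (X₂,Y₂,f₂)` iff
`X₁ ≤ X₂`, `Y₁ ≤ Y₂` and `f₂` restricts to `f₁` on `X₁`. -/
def SWTriple.Extends {R M : Type*} [Ring R] [AddCommGroup M] [Module R M]
    (t s : SWTriple R M) : Prop :=
  ∃ hX : t.X ≤ s.X, t.Y ≤ s.Y ∧
    ∀ x : t.X, (s.f ⟨x.1, hX x.2⟩ : M) = (t.f x : M)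

/-- `M` is semi-weak-CS: for every chain in the poset `S(M)`, with `X` the union of the first
components and `Y` the union of the second components, there are direct summands `A`, `B`
of `M` with `X` essential in `A` and `Y` essential in `B`. -/
def IsSemiWeakCS (R M : Type*) [Ring R] [AddCommGroup M] [Module R M] : Prop :=
  ∀ C : Set (SWTriple R M), IsChain SWTriple.Extends C →
    ∃ A B : Submodule R M, IsDirectSummand A ∧ IsDirectSummand B ∧
      IsEssentialIn (⨆ t ∈ C, t.X) A ∧ IsEssentialIn (⨆ t ∈ C, t.Y) B

/-- `M` is strongly `C4*` if it is both semi-weak-CS and `C4*`. -/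
def IsStronglyC4StarModule (R M : Type*) [Ring R] [AddCommGroup M] [Module R M] : Prop :=
  IsSemiWeakCS R M ∧ IsC4StarModule R M

/-- `R` is a right `C4*`-ring: the right regular module `R_R` (i.e. `R` as a module over
`Rᵐᵒᵖ`) is a `C4*`-module. -/
def IsRightC4StarRing (R : Type*) [Ring R] : Prop := IsC4StarModule Rᵐᵒᵖ R

/-- `R` is a left `C4*`-ring: the left regular module `_RR` is a `C4*`-module. -/
def IsLeftC4StarRing (R : Type*) [Ring R] : Prop := IsC4StarModule R R

/-- `R` is a strongly right `C4*`-ring. -/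
def IsStronglyRightC4StarRing (R : Type*) [Ring R] : Prop := IsStronglyC4StarModule Rᵐᵒᵖ R

/-- `R` is a strongly left `C4*`-ring. -/
def IsStronglyLeftC4StarRing (R : Type*) [Ring R] : Prop := IsStronglyC4StarModule R R

/-- `R` is right semi-weak-CS. -/
def IsRightSemiWeakCSRing (R : Type*) [Ring R] : Prop := IsSemiWeakCS Rᵐᵒᵖ R

/-- `R` is left semi-weak-CS. -/
def IsLeftSemiWeakCSRing (R : Type*) [Ring R] : Prop := IsSemiWeakCS R R

/-- The left square-free transfer condition `LSF`: if the right regular module `T_T` is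
summand-square-free then the left regular module `_TT` is square-free. -/
def LSF (T : Type*) [Ring T] : Prop :=
  IsSummandSquareFree Tᵐᵒᵖ T → IsSquareFreeModule T T

end C4Defs

section Corner

variable {T : Type*} [Ring T]

/-- The corner `eTe = {x : T | e * x = x ∧ x * e = x}` as a non-unital subring. -/
def cornerSubring (e : T) : NonUnitalSubring T where
  carrier := {x : T | e * x = x ∧ x * e = x}
  add_mem' := by
    rintro a b ⟨ha1, ha2⟩ ⟨hb1, hb2⟩
    exact ⟨by rw [mul_add, ha1, hb1], by rw [add_mul, ha2, hb2]⟩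
  zero_mem' := ⟨mul_zero e, zero_mul e⟩
  neg_mem' := by
    rintro a ⟨ha1, ha2⟩
    exact ⟨by rw [mul_neg, ha1], by rw [neg_mul, ha2]⟩
  mul_mem' := by
    rintro a b ⟨ha1, ha2⟩ ⟨hb1, hb2⟩
    exact ⟨by rw [← mul_assoc, ha1], by rw [mul_assoc, hb2]⟩

theorem mem_cornerSubring {e x : T} :
    x ∈ cornerSubring e ↔ e * x = x ∧ x * e = x := Iff.rfl

/-- The corner ring `eTe` associated to an idempotent `e` of `T`; its identity is `e`. -/
def Corner (e : T) (he : IsIdempotentElem e) : Type _ := ↥(cornerSubring e)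

instance {e : T} {he : IsIdempotentElem e} : Ring (Corner e he) :=
  { (inferInstance : NonUnitalRing ↥(cornerSubring e)) with
    one := ⟨e, he, he⟩
    one_mul := fun x => Subtype.ext (mem_cornerSubring.mp x.2).1
    mul_one := fun x => Subtype.ext (mem_cornerSubring.mp x.2).2 }

/-- `eT = {x : T | e * x = x}` as an additive subgroup; it is a left module over the
corner ring `eTe`. -/
def leftPart (e : T) : AddSubgroup T where
  carrier := {x : T | e * x = x}
  add_mem' := by
    intro a b ha hb
    simp only [Set.mem_setOf_eq] at *
    rw [mul_add, ha, hb]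
  zero_mem' := mul_zero e
  neg_mem' := by
    intro a ha
    simp only [Set.mem_setOf_eq] at *
    rw [mul_neg, ha]

/-- `Te = {x : T | x * e = x}` as an additive subgroup; it is a right module over the
corner ring `eTe`. -/
def rightPart (e : T) : AddSubgroup T where
  carrier := {x : T | x * e = x}
  add_mem' := by
    intro a b ha hb
    simp only [Set.mem_setOf_eq] at *
    rw [add_mul, ha, hb]
  zero_mem' := zero_mul e
  neg_mem' := by
    intro a ha
    simp only [Set.mem_setOf_eq] at *
    rw [neg_mul, ha]

theorem mem_leftPart {e x : T} : x ∈ leftPart e ↔ e * x = x := Iff.rfl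

theorem mem_rightPart {e x : T} : x ∈ rightPart e ↔ x * e = x := Iff.rfl

/-- `eT` is a (unital) left module over the corner ring `eTe`. -/
instance {e : T} {he : IsIdempotentElem e} : Module (Corner e he) ↥(leftPart e) where
  smul c x := ⟨c.1 * x.1, by
    have h1 : e * c.1 = c.1 := (mem_cornerSubring.mp c.2).1
    show e * (c.1 * x.1) = c.1 * x.1
    rw [← mul_assoc, h1]⟩
  one_smul x := Subtype.ext (by
    show e * x.1 = x.1
    exact mem_leftPart.mp x.2)
  mul_smul a b x := Subtype.ext (by
    show (a.1 * b.1) * x.1 = a.1 * (b.1 * x.1)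
    rw [mul_assoc])
  smul_zero a := Subtype.ext (by
    show a.1 * 0 = 0
    exact mul_zero _)
  smul_add a x y := Subtype.ext (by
    show a.1 * (x.1 + y.1) = a.1 * x.1 + a.1 * y.1
    exact mul_add _ _ _)
  add_smul a b x := Subtype.ext (by
    show (a.1 + b.1) * x.1 = a.1 * x.1 + b.1 * x.1
    exact add_mul _ _ _)
  zero_smul x := Subtype.ext (by
    show (0 : T) * x.1 = 0
    exact zero_mul _)

/-- `Te` is a (unital) right module over the corner ring `eTe`, i.e. a module over
`(eTe)ᵐᵒᵖ`. -/
instance {e : T} {he : IsIdempotentElem e} : Module (Corner e he)ᵐᵒᵖ ↥(rightPart e) where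
  smul c x := ⟨x.1 * (unop c).1, by
    have h2 : (unop c).1 * e = (unop c).1 := (mem_cornerSubring.mp (unop c).2).2
    show (x.1 * (unop c).1) * e = x.1 * (unop c).1
    rw [mul_assoc, h2]⟩
  one_smul x := Subtype.ext (by
    show x.1 * e = x.1
    exact mem_rightPart.mp x.2)
  mul_smul a b x := Subtype.ext (by
    show x.1 * ((unop b).1 * (unop a).1) = (x.1 * (unop b).1) * (unop a).1
    rw [mul_assoc])
  smul_zero a := Subtype.ext (by
    show (0 : T) * (unop a).1 = 0
    exact zero_mul _)
  smul_add a x y := Subtype.ext (by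
    show (x.1 + y.1) * (unop a).1 = x.1 * (unop a).1 + y.1 * (unop a).1
    exact add_mul _ _ _)
  add_smul a b x := Subtype.ext (by
    show x.1 * ((unop a).1 + (unop b).1) = x.1 * (unop a).1 + x.1 * (unop b).1
    exact mul_add _ _ _)
  zero_smul x := Subtype.ext (by
    show x.1 * (0 : T) = 0
    exact mul_zero _)

/-- The hereditary side-transfer condition `HST`: for every idempotent `e` of `T`, if the
module `eT`/`Te` is summand-square-free as a right `eTe`-module (formalized on the carrier
`Te = rightPart e`, which carries the unital right `eTe`-action; at `e = 1` this is the right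
regular module `T_T`), then the left `eTe`-module (carrier `eT = leftPart e`, carrying the
unital left `eTe`-action; at `e = 1` this is the left regular module `_TT`) is square-free. -/
def HST (T : Type*) [Ring T] : Prop :=
  ∀ (e : T) (he : IsIdempotentElem e),
    IsSummandSquareFree (Corner e he)ᵐᵒᵖ ↥(rightPart e) →
      IsSquareFreeModule (Corner e he) ↥(leftPart e)

/-- The corner-stability axiom `CSA`: for every idempotent `e` of `T`, the left regular
module of the corner ring `eTe` is semi-weak-CS. -/
def CornerCSA (T : Type*) [Ring T] : Prop :=
  ∀ (e : T) (he : IsIdempotentElem e),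
    IsSemiWeakCS (Corner e he) (Corner e he)

end Corner

section SymmetryDatum

/-- A right-to-left symmetry datum on `R`: a ring decomposition `R ≅ S × T` where `S` is
semisimple artinian, the right regular module `T_T` is summand-square-free, the two ideals
`S`, `T` are orthogonal as right `R`-modules (no nonzero isomorphic right `R`-submodules),
and `T` satisfies `HST` and `CSA`. -/
structure RightToLeftSymmetryDatum (R S T : Type*) [Ring R] [Ring S] [Ring T] where
  iso : R ≃+* S × T
  semisimpleArtinian : IsSemisimpleRing S
  ssf : IsSummandSquareFree Tᵐᵒᵖ T
  orthogonal : ∀ A B : Submodule Rᵐᵒᵖ R,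
    (∀ a ∈ A, (iso a).2 = 0) → (∀ b ∈ B, (iso b).1 = 0) →
    A ≠ ⊥ → B ≠ ⊥ → IsEmpty (A ≃ₗ[Rᵐᵒᵖ] B)
  hst : HST T
  csa : CornerCSA T

end SymmetryDatum

section Beta

variable (R : Type*) [Ring R]

/-- The right annihilator `r_R(P) = {s : R | P s = 0}` of a right submodule `P` of `R`. -/
def rightAnnSet (P : Submodule Rᵐᵒᵖ R) : Set R := {s : R | ∀ p ∈ P, p * s = 0}

/-- The annihilator-bidual `β_r(P) = ℓ_R(r_R(P))`, as a right ideal of `R`. -/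
def betaR (P : Submodule Rᵐᵒᵖ R) : Submodule Rᵐᵒᵖ R where
  carrier := {r : R | ∀ s ∈ rightAnnSet R P, r * s = 0}
  add_mem' := by
    intro a b ha hb
    intro s hs
    rw [add_mul, ha s hs, hb s hs, add_zero]
  zero_mem' := by
    intro s hs
    exact zero_mul s
  smul_mem' := by
    intro c x hx s hs
    show (x * unop c) * s = 0
    rw [mul_assoc]
    refine hx _ ?_
    intro p hp
    rw [← mul_assoc]
    exact hs (p * unop c) (Submodule.smul_mem P c hp)

/-- A right ideal is a two-sided ideal which is a ring direct summand of `R` iff it is of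
the form `cR` for a central idempotent `c`. -/
def IsRingDirectSummandIdeal {R : Type*} [Ring R] (I : Submodule Rᵐᵒᵖ R) : Prop :=
  ∃ c : R, IsIdempotentElem c ∧ (∀ r : R, c * r = r * c) ∧ (∀ x : R, x ∈ I ↔ c * x = x)

/-- `R` has right semisimple annihilator asymmetry. -/
def HasRightSemisimpleAnnihilatorAsymmetry (R : Type*) [Ring R] : Prop :=
  ∃ P : Submodule Rᵐᵒᵖ R, IsSemisimpleModule Rᵐᵒᵖ P ∧ IsDirectSummand P ∧
    (¬ IsSemisimpleModule Rᵐᵒᵖ (betaR R P) ∨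
     (IsSemisimpleModule Rᵐᵒᵖ (betaR R P) ∧ ¬ IsRingDirectSummandIdeal (betaR R P)) ∨
     ¬ IsEssentialIn P (betaR R P))

end Beta

/-!
Put `c = (1, 0)`, a central idempotent of `S × T`, so that every `(S × T)`-module splits as
`cM ⊕ (1 - c)M`. For submodules of `S × T` the part `cM` is semisimple, since it is an
`S`-module, and `(1 - c)M` is square-free: `HST` at the idempotent `1` turns `T_T`
summand-square-free into `_TT` square-free. Multiplication by `c` commutes with every
isomorphism, so two isomorphic submodules `U`, `V` with `U ⊓ V = 0` meet `(1 - c)M` in isomorphic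
disjoint submodules; these vanish, and `U`, `V` lie in the semisimple part `cM`.

For `C4`, a complement `K` of `ker f` in `A` is isomorphic to `f(A) ≤ B` and disjoint from it,
so `f(A)` lies in the semisimple part of `B` and is a summand. For semi-weak-CS, every triple of
a chain lies in `cM`, so the unions of its components are themselves summands.
-/

open Function Submodule LinearMap

section SquareFree

variable {R S M N P : Type*} [Ring R] [Ring S] [AddCommGroup M] [AddCommGroup N]
  [AddCommGroup P] [Module R M] [Module S N] [Module R P]

theorem IsSquareFreeModule.subsingleton_of_disjoint_range (h : IsSquareFreeModule R M)
    {j₁ j₂ : P →ₗ[R] M} (hj₁ : Injective j₁) (hj₂ : Injective j₂)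
    (hd : Disjoint (range j₁) (range j₂)) : Subsingleton P := by
  by_contra hP
  rw [not_subsingleton_iff_nontrivial] at hP
  have hne {j : P →ₗ[R] M} (hj : Injective j) : range j ≠ ⊥ := by
    rw [Ne, range_eq_bot]
    rintro rfl
    obtain ⟨x, hx⟩ := exists_ne (0 : P)
    exact hx (hj (by simp))
  exact (h _ _ (hne hj₁) (hne hj₂) hd.eq_bot).false
    ((LinearEquiv.ofInjective j₁ hj₁).symm.trans (LinearEquiv.ofInjective j₂ hj₂))

variable {σ : R →+* S} [RingHomSurjective σ] {l : M →ₛₗ[σ] N}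

noncomputable def LinearEquiv.mapOfInjective {A B : Submodule R M} (g : A ≃ₗ[R] B)
    (hl : Injective l) : A.map l ≃ₗ[S] B.map l :=
  let e (C : Submodule R M) : C ≃+ C.map l := AddEquiv.ofBijective (l.submoduleMap C)
    ⟨fun x y hxy => Subtype.ext (hl (congrArg Subtype.val hxy)), l.submoduleMap_surjective C⟩
  have e_smul (C : Submodule R M) (r : R) (x : C) : e C (r • x) = σ r • e C x :=
    map_smulₛₗ (l.submoduleMap C) r x
  have e_symm_smul (C : Submodule R M) (r : R) (y : C.map l) :
      (e C).symm (σ r • y) = r • (e C).symm y := by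
    rw [AddEquiv.symm_apply_eq, e_smul, AddEquiv.apply_symm_apply]
  ((e A).symm.trans (g.toAddEquiv.trans (e B))).toLinearEquiv fun s y => by
    obtain ⟨r, rfl⟩ := σ.surjective s
    simp [e_symm_smul, e_smul]

theorem IsSquareFreeModule.of_injective (hl : Injective l) (h : IsSquareFreeModule S N) :
    IsSquareFreeModule R M := by
  have map_ne_bot {C : Submodule R M} (hC : C ≠ ⊥) : C.map l ≠ ⊥ := by
    rwa [← Submodule.map_bot l, Ne, (map_injective_of_injective hl).eq_iff]
  exact fun A B hA hB hAB => ⟨fun g => (h _ _ (map_ne_bot hA) (map_ne_bot hB)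
    (by rw [← map_inf l hl, hAB, Submodule.map_bot])).false (g.mapOfInjective hl)⟩

theorem IsSummandSquareFree.of_bijective (hl : Bijective l) (h : IsSummandSquareFree S N) :
    IsSummandSquareFree R M := by
  let e := orderIsoMapComapOfBijective l hl
  exact fun A B ⟨A', hA'⟩ ⟨B', hB'⟩ hA hB hAB =>
    ⟨fun g => (h (e A) (e B) ⟨e A', e.isCompl hA'⟩ ⟨e B', e.isCompl hB'⟩
      ((map_eq_bot_iff e).not.mpr hA) ((map_eq_bot_iff e).not.mpr hB)
      (by rw [← e.map_inf, hAB, OrderIso.map_bot])).false (g.mapOfInjective hl.injective)⟩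

end SquareFree

section Summand

variable {R M : Type*} [Ring R] [AddCommGroup M] [Module R M]

theorem isEssentialIn_refl (X : Submodule R M) : IsEssentialIn X X :=
  ⟨le_rfl, fun _ hN hN0 => by rwa [inf_eq_right.mpr hN]⟩

theorem IsCompl.isDirectSummand_of_le {p q x : Submodule R M} (hpq : IsCompl p q)
    [IsSemisimpleModule R p] (hx : x ≤ p) : IsDirectSummand x := by
  have : ComplementedLattice (Set.Iic p) := p.mapIic.complementedLattice_iff.mp inferInstance
  obtain ⟨y, -, hxy, hsup⟩ := Set.Iic.complementedLattice_iff.mp this x hx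
  exact ⟨y ⊔ q, (disjoint_iff.mpr hxy).isCompl_sup_right_of_isCompl_sup_left (hsup ▸ hpq)⟩

end Summand

section CentralIdempotent

variable {R M P : Type*} [Ring R] [AddCommGroup M] [AddCommGroup P] [Module R M] [Module R P]
  {c : R}

variable (M) in
def centralSMul (hc : ∀ r, Commute c r) : M →ₗ[R] M where
  toFun x := c • x
  map_add' := smul_add c
  map_smul' r x := by simp only [RingHom.id_apply, smul_smul, (hc r).eq]

variable (hc : ∀ r, Commute c r)

theorem centralSMul_apply (x : M) : centralSMul M hc x = c • x := rfl

theorem isIdempotentElem_centralSMul (hc' : IsIdempotentElem c) :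
    IsIdempotentElem (centralSMul M hc) :=
  LinearMap.ext fun x => by simp [centralSMul_apply, Module.End.mul_apply, smul_smul, hc'.eq]

theorem map_centralSMul (f : M →ₗ[R] P) (x : M) :
    f (centralSMul M hc x) = centralSMul P hc (f x) :=
  f.map_smul c x

theorem map_mem_range_centralSMul (f : M →ₗ[R] P) {x : M} (hx : x ∈ range (centralSMul M hc)) :
    f x ∈ range (centralSMul P hc) := by
  obtain ⟨y, rfl⟩ := hx
  exact ⟨f y, (map_centralSMul hc f y).symm⟩

theorem map_mem_ker_centralSMul (f : M →ₗ[R] P) {x : M} (hx : x ∈ ker (centralSMul M hc)) :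
    f x ∈ ker (centralSMul P hc) := by
  rw [mem_ker] at hx ⊢
  rw [← map_centralSMul, hx, map_zero]

variable {hc}

theorem range_le_range_centralSMul_of_disjoint (hc' : IsIdempotentElem c)
    (h0 : IsSquareFreeModule R (ker (centralSMul M hc))) {j₁ j₂ : P →ₗ[R] M}
    (hj₁ : Injective j₁) (hj₂ : Injective j₂) (hd : Disjoint (range j₁) (range j₂)) :
    range j₁ ≤ range (centralSMul M hc) := by
  let restr (j : P →ₗ[R] M) : ker (centralSMul P hc) →ₗ[R] ker (centralSMul M hc) :=
    j.restrict fun _ => map_mem_ker_centralSMul hc j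
  have restr_injective {j : P →ₗ[R] M} (hj : Injective j) : Injective (restr j) :=
    fun _ _ hxy => Subtype.ext (hj (congrArg Subtype.val hxy))
  have : Subsingleton (ker (centralSMul P hc)) :=
    h0.subsingleton_of_disjoint_range (restr_injective hj₁) (restr_injective hj₂) <| by
      rw [Submodule.disjoint_def]
      rintro _ ⟨x₁, rfl⟩ ⟨x₂, hx₂⟩
      exact Subtype.ext (Submodule.disjoint_def.mp hd _ ⟨x₁, rfl⟩ ⟨x₂, congrArg Subtype.val hx₂⟩)
  rintro _ ⟨x, rfl⟩
  have hx : x - c • x ∈ ker (centralSMul P hc) := by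
    simp [centralSMul_apply, smul_sub, smul_smul, hc'.eq]
  have hfix : x = c • x := sub_eq_zero.mp (congrArg Subtype.val (Subsingleton.elim ⟨_, hx⟩ 0))
  rw [(isIdempotentElem_centralSMul hc hc').mem_range_iff, ← map_centralSMul, centralSMul_apply,
    ← hfix]

theorem le_range_centralSMul_of_linearEquiv (hc' : IsIdempotentElem c)
    (h0 : IsSquareFreeModule R (ker (centralSMul M hc))) {U V : Submodule R M}
    (hUV : Disjoint U V) (g : U ≃ₗ[R] V) : U ≤ range (centralSMul M hc) := by
  have hrange : range (V.subtype ∘ₗ g.toLinearMap) = V := by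
    rw [range_comp, LinearEquiv.range, Submodule.map_top, range_subtype]
  simpa using range_le_range_centralSMul_of_disjoint hc' h0 (j₂ := V.subtype ∘ₗ g.toLinearMap)
    U.injective_subtype (V.injective_subtype.comp g.injective) (by rwa [range_subtype, hrange])

theorem isSemisimpleModule_range_centralSMul_of_injective {f : P →ₗ[R] M} (hf : Injective f)
    [IsSemisimpleModule R (range (centralSMul M hc))] :
    IsSemisimpleModule R (range (centralSMul P hc)) :=
  IsSemisimpleModule.of_injective (f.restrict fun _ => map_mem_range_centralSMul hc f)
    fun _ _ hxy => Subtype.ext (hf (congrArg Subtype.val hxy))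

theorem isSquareFreeModule_ker_centralSMul_of_injective {f : P →ₗ[R] M} (hf : Injective f)
    (h0 : IsSquareFreeModule R (ker (centralSMul M hc))) :
    IsSquareFreeModule R (ker (centralSMul P hc)) :=
  h0.of_injective (l := f.restrict fun _ => map_mem_ker_centralSMul hc f)
    fun _ _ hxy => Subtype.ext (hf (congrArg Subtype.val hxy))

theorem isC4Module_of_centralSMul (hc' : IsIdempotentElem c)
    [IsSemisimpleModule R (range (centralSMul M hc))]
    (h0 : IsSquareFreeModule R (ker (centralSMul M hc))) : IsC4Module R M := by
  intro A B hAB f ⟨K, hK⟩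
  have hfK : Injective (f.domRestrict K) := injective_domRestrict_iff.mpr hK.disjoint.symm
  have hrange : range f ≤ K.map f :=
    (range_eq_map f).trans_le ((LinearMap.map_le_map_iff f).mpr hK.symm.codisjoint.top_le)
  have himage := range_le_range_centralSMul_of_disjoint hc' h0 (j₁ := B.subtype ∘ₗ f.domRestrict K)
    (j₂ := A.subtype ∘ₗ K.subtype) (B.injective_subtype.comp hfK)
    (A.injective_subtype.comp K.injective_subtype)
    (hAB.disjoint.symm.mono (by simp [range_comp, map_subtype_le])
      (by simp [range_comp, map_subtype_le]))
  have : IsSemisimpleModule R (range (centralSMul B hc)) :=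
    isSemisimpleModule_range_centralSMul_of_injective B.injective_subtype
  refine (isIdempotentElem_centralSMul hc hc').isCompl.isDirectSummand_of_le fun y hy => ?_
  obtain ⟨k, hk, rfl⟩ := hrange hy
  have hfk := himage ⟨⟨k, hk⟩, rfl⟩
  rw [(isIdempotentElem_centralSMul hc hc').mem_range_iff] at hfk ⊢
  exact Subtype.ext hfk

theorem isSemiWeakCS_of_centralSMul (hc' : IsIdempotentElem c)
    [IsSemisimpleModule R (range (centralSMul M hc))]
    (h0 : IsSquareFreeModule R (ker (centralSMul M hc))) : IsSemiWeakCS R M := by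
  intro C _
  have hcompl := (isIdempotentElem_centralSMul (M := M) hc hc').isCompl
  have hX : ⨆ t ∈ C, t.X ≤ range (centralSMul M hc) := iSup₂_le fun t _ =>
    le_range_centralSMul_of_linearEquiv hc' h0 (disjoint_iff.mpr t.disj) t.f
  have hY : ⨆ t ∈ C, t.Y ≤ range (centralSMul M hc) := iSup₂_le fun t _ =>
    le_range_centralSMul_of_linearEquiv hc' h0 (disjoint_iff.mpr t.disj).symm t.f.symm
  exact ⟨_, _, hcompl.isDirectSummand_of_le hX, hcompl.isDirectSummand_of_le hY,
    isEssentialIn_refl _, isEssentialIn_refl _⟩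

theorem isStronglyC4StarModule_of_centralSMul (hc' : IsIdempotentElem c)
    [IsSemisimpleModule R (range (centralSMul M hc))]
    (h0 : IsSquareFreeModule R (ker (centralSMul M hc))) : IsStronglyC4StarModule R M :=
  ⟨isSemiWeakCS_of_centralSMul hc' h0, fun N =>
    have : IsSemisimpleModule R (range (centralSMul N hc)) :=
      isSemisimpleModule_range_centralSMul_of_injective N.injective_subtype
    isC4Module_of_centralSMul hc'
      (isSquareFreeModule_ker_centralSMul_of_injective N.injective_subtype h0)⟩

end CentralIdempotent

section Product

variable {S T : Type*} [Ring S] [Ring T]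

theorem commute_one_zero (r : S × T) : Commute ((1, 0) : S × T) r :=
  Prod.ext (Commute.one_left r.1) (Commute.zero_left r.2)

theorem isIdempotentElem_one_zero : IsIdempotentElem ((1, 0) : S × T) :=
  Prod.ext (mul_one 1) (mul_zero 0)

theorem mem_range_centralSMul_one_zero {x : S × T} :
    x ∈ range (centralSMul (R := S × T) (S × T) commute_one_zero) ↔ x.2 = 0 := by
  rw [(isIdempotentElem_centralSMul commute_one_zero isIdempotentElem_one_zero).mem_range_iff]
  simp [centralSMul_apply, Prod.ext_iff, eq_comm]

theorem mem_ker_centralSMul_one_zero {x : S × T} :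
    x ∈ ker (centralSMul (R := S × T) (S × T) commute_one_zero) ↔ x.1 = 0 := by
  simp [centralSMul_apply, Prod.ext_iff]

theorem isSemisimpleModule_range_centralSMul_one_zero (hS : IsSemisimpleRing S) :
    IsSemisimpleModule (S × T) (range (centralSMul (R := S × T) (S × T) commute_one_zero)) := by
  let l : range (centralSMul (R := S × T) (S × T) commute_one_zero) →ₛₗ[RingHom.fst S T] S :=
    { toFun x := x.1.1, map_add' _ _ := rfl, map_smul' _ _ := rfl }
  refine (l.isSemisimpleModule_iff_of_bijective ⟨fun x y hxy => ?_, fun s => ?_⟩).mpr hS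
  · exact Subtype.ext (Prod.ext hxy ((mem_range_centralSMul_one_zero.mp x.2).trans
      (mem_range_centralSMul_one_zero.mp y.2).symm))
  · exact ⟨⟨(s, 0), mem_range_centralSMul_one_zero.mpr rfl⟩, rfl⟩

theorem isSquareFreeModule_ker_centralSMul_one_zero (hT : IsSquareFreeModule T T) :
    IsSquareFreeModule (S × T) (ker (centralSMul (R := S × T) (S × T) commute_one_zero)) := by
  let l : ker (centralSMul (R := S × T) (S × T) commute_one_zero) →ₛₗ[RingHom.snd S T] T :=
    { toFun x := x.1.2, map_add' _ _ := rfl, map_smul' _ _ := rfl }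
  refine hT.of_injective (l := l) fun x y hxy => Subtype.ext (Prod.ext ?_ hxy)
  exact (mem_ker_centralSMul_one_zero.mp x.2).trans (mem_ker_centralSMul_one_zero.mp y.2).symm

end Product

section CornerOne

variable (T : Type*) [Ring T]

def cornerOneRingEquiv : Corner (1 : T) .one ≃+* T where
  toFun x := x.1
  invFun t := ⟨t, one_mul t, mul_one t⟩
  left_inv _ := rfl
  right_inv _ := rfl
  map_mul' _ _ := rfl
  map_add' _ _ := rfl

variable {T}

theorem HST.isSquareFreeModule_of_isSummandSquareFree (hhst : HST T)
    (hssf : IsSummandSquareFree Tᵐᵒᵖ T) : IsSquareFreeModule T T := by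
  let r : rightPart (1 : T) →ₛₗ[((cornerOneRingEquiv T).op : (Corner (1 : T) .one)ᵐᵒᵖ →+* Tᵐᵒᵖ)]
      T :=
    { toFun x := x.1, map_add' _ _ := rfl, map_smul' _ _ := rfl }
  have hleft := hhst 1 .one (hssf.of_bijective (l := r)
    ⟨Subtype.val_injective, fun t => ⟨⟨t, mul_one t⟩, rfl⟩⟩)
  let l : T →ₛₗ[((cornerOneRingEquiv T).symm : T →+* Corner (1 : T) .one)] leftPart (1 : T) :=
    { toFun t := ⟨t, one_mul t⟩, map_add' _ _ := rfl, map_smul' _ _ := rfl }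
  exact hleft.of_injective (l := l) fun _ _ h => congrArg Subtype.val h

end CornerOne

theorem right_to_left_strong_main_general {S T : Type*} [Ring S] [Ring T]
    (hS : IsSemisimpleRing S)
    (hssf : IsSummandSquareFree Tᵐᵒᵖ T)
    (hhst : HST T) :
    IsStronglyLeftC4StarRing (S × T) :=
  have := isSemisimpleModule_range_centralSMul_one_zero (T := T) hS
  isStronglyC4StarModule_of_centralSMul isIdempotentElem_one_zero
    (isSquareFreeModule_ker_centralSMul_one_zero
      (hhst.isSquareFreeModule_of_isSummandSquareFree hssf))

/-- Let `R = S × T` be a strongly right `C4*`-ring, where `S` is semisimple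
artinian, the right regular module `T_T` is summand-square-free, and `T` satisfies `HST`
and `CSA`. Then `R` is a strongly left `C4*`-ring. -/
theorem right_to_left_strong_main {S T : Type*} [Ring S] [Ring T]
    (h : IsStronglyRightC4StarRing (S × T))
    (hS : IsSemisimpleRing S)
    (hssf : IsSummandSquareFree Tᵐᵒᵖ T)
    (hhst : HST T) (hcsa : CornerCSA T) :
    IsStronglyLeftC4StarRing (S × T) :=
  right_to_left_strong_main_general hS hssf hhst
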